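/- arXiv:2405.11250 — 5 statements merged into one kernel-verified Lean document; each statement's English description precedes it below -/
import Mathlib

section
/- In the causal ABA framework D_dag for a finite variable set V, the conflict-free sets of arrow assumptions are exactly those whose corresponding digraphs are acyclic: a set S of arrow assumptions arr_{xy} is conflict-free (i.e., does not derive the contrary of any of its own members via the cycle rules and mutual-exclusion rules) if and only if the directed graph (V, {(x,y) : arr_{xy} ∈ S}) is a DAG and S contains at most one of arr_{xy}, arr_{yx} for each pair x ≠ y. -/
/-- Assumptions of the causal ABA framework `D_dag`: an arrow assumption
`arr x y` for each ordered pair of distinct variables and a no-edge assumption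
`noe` for each unordered pair. -/
inductive DagAsm (V : Type) : Type
  | arr : V → V → DagAsm V
  | noe : Sym2 V → DagAsm V

namespace DagAsm

/-- The assumption set of `D_dag`. -/
def Asms (V : Type) : Set (DagAsm V) :=
  {a | ∃ x y : V, x ≠ y ∧ (a = arr x y ∨ a = noe s(x, y))}

/-- The attack relation induced by the rules of `D_dag`: mutual exclusion among
`{arr x y, arr y x, noe {x,y}}` for each pair `x ≠ y`, and, for each directed
cycle, the arrows along the cycle attack each arrow in it. -/
inductive Att (V : Type) : Set (DagAsm V) → DagAsm V → Prop
  | arrArr (x y : V) : x ≠ y → Att V {arr y x} (arr x y)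
  | noeArr (x y : V) : x ≠ y → Att V {noe s(x, y)} (arr x y)
  | arrNoe (x y : V) : x ≠ y → Att V {arr x y} (noe s(x, y))
  | cycle (l : List V) (x y : V) : 2 ≤ l.length → l.head? = l.getLast? →
      (x, y) ∈ l.zip l.tail →
      Att V {a | ∃ p ∈ l.zip l.tail, a = arr p.1 p.2} (arr x y)

/-- `S` attacks `T` if some subset of `S` attacks a member of `T`. -/
def Attacks {V : Type} (S T : Set (DagAsm V)) : Prop :=
  ∃ U ⊆ S, ∃ a ∈ T, Att V U a

def ConflictFree {V : Type} (S : Set (DagAsm V)) : Prop :=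
  S ⊆ Asms V ∧ ¬ Attacks S S

def Defends {V : Type} (S T : Set (DagAsm V)) : Prop :=
  ∀ U ⊆ Asms V, Attacks U T → Attacks S U

def Admissible {V : Type} (S : Set (DagAsm V)) : Prop :=
  ConflictFree S ∧ Defends S S

def Complete {V : Type} (S : Set (DagAsm V)) : Prop :=
  Admissible S ∧ ∀ T ⊆ Asms V, Defends S T → T ⊆ S

/-- Preferred: ⊆-maximal admissible. -/
def Preferred {V : Type} (S : Set (DagAsm V)) : Prop :=
  Admissible S ∧ ∀ T : Set (DagAsm V), Admissible T → S ⊆ T → T = S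

/-- Stable: conflict-free and attacks every assumption outside itself. -/
def Stable {V : Type} (S : Set (DagAsm V)) : Prop :=
  ConflictFree S ∧ ∀ a ∈ Asms V, a ∉ S → Attacks S {a}

/-- The digraph `G(S)` induced by the arrow assumptions in `S`. -/
def graphOf {V : Type} (S : Set (DagAsm V)) : V → V → Prop :=
  fun x y => arr x y ∈ S

end DagAsm

/-!
A cycle rule of `D_dag` has as body the arrows along a closed list of variables, i.e. a closed
walk, so a set of arrows contains the body of a cycle rule exactly when its digraph has a cycle.
Among the mutual-exclusion rules, the only one relating two arrows is `arr y x` attacking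
`arr x y`; the others involve a `noe` assumption and cannot fire inside a set of arrows.
-/

theorem List.isChain_iff_forall_mem_zip_tail {α : Type*} {r : α → α → Prop} {l : List α} :
    l.IsChain r ↔ ∀ p ∈ l.zip l.tail, r p.1 p.2 := by
  induction l using List.twoStepInduction with
  | nil | singleton => simp
  | cons_cons a b l _ ih => simp_all [List.isChain_cons_cons]

theorem Relation.transGen_iff_exists_isChain {α : Type*} {r : α → α → Prop} {a c : α} :
    TransGen r a c ↔
      ∃ b l, (a :: b :: l).IsChain r ∧ (a :: b :: l).getLast (List.cons_ne_nil _ _) = c := by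
  rw [TransGen.head'_iff]
  constructor
  · rintro ⟨b, hab, hbc⟩
    obtain ⟨l, hchain, hlast⟩ := List.exists_isChain_cons_of_relationReflTransGen hbc
    exact ⟨b, l, List.isChain_cons_cons.mpr ⟨hab, hchain⟩, by rwa [List.getLast_cons_cons]⟩
  · rintro ⟨b, l, hchain, hlast⟩
    rw [List.isChain_cons_cons] at hchain
    exact ⟨b, hchain.1, List.relationReflTransGen_of_exists_isChain_cons l hchain.2
      (by rwa [List.getLast_cons_cons] at hlast)⟩

namespace DagAsm

variable {V : Type} {S : Set (DagAsm V)}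

def Arrows (V : Type) : Set (DagAsm V) :=
  {a | ∃ x y : V, x ≠ y ∧ a = arr x y}

theorem arrows_subset_asms : Arrows V ⊆ Asms V := by
  rintro _ ⟨x, y, hxy, rfl⟩
  exact ⟨x, y, hxy, Or.inl rfl⟩

theorem noe_notMem_arrows (e : Sym2 V) : noe e ∉ Arrows V := by
  rintro ⟨x, y, -, h⟩
  cases h

def arrowsAlong (l : List V) : Set (DagAsm V) :=
  {a | ∃ p ∈ l.zip l.tail, a = arr p.1 p.2}

theorem arrowsAlong_subset_iff {l : List V} :
    arrowsAlong l ⊆ S ↔ l.IsChain (graphOf S) := by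
  rw [List.isChain_iff_forall_mem_zip_tail]
  exact ⟨fun h p hp => h ⟨p, hp, rfl⟩, by rintro h _ ⟨p, hp, rfl⟩; exact h p hp⟩

theorem attacks_self_of_transGen {a : V}
    (h : Relation.TransGen (graphOf S) a a) : Attacks S S := by
  obtain ⟨b, l, hchain, hlast⟩ := Relation.transGen_iff_exists_isChain.mp h
  have hab : arr a b ∈ S := (List.isChain_cons_cons.mp hchain).1
  refine ⟨arrowsAlong (a :: b :: l), arrowsAlong_subset_iff.mpr hchain, arr a b, hab,
    Att.cycle _ a b (by simp) ?_ (by simp)⟩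
  rw [List.getLast?_eq_getLast_of_ne_nil (List.cons_ne_nil _ _), hlast]
  rfl

theorem attacks_self_of_arr_mem_of_arr_mem {x y : V} (hxy : x ≠ y)
    (h₁ : arr x y ∈ S) (h₂ : arr y x ∈ S) : Attacks S S :=
  ⟨{arr y x}, Set.singleton_subset_iff.mpr h₂, arr x y, h₁, Att.arrArr x y hxy⟩

theorem Att.exists_cycle_or_two_cycle {U : Set (DagAsm V)} {a : DagAsm V}
    (hS : S ⊆ Arrows V) (hU : U ⊆ S) (ha : a ∈ S) (h : Att V U a) :
    (∃ x, Relation.TransGen (graphOf S) x x) ∨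
      ∃ x y, x ≠ y ∧ arr x y ∈ S ∧ arr y x ∈ S := by
  cases h with
  | arrArr x y hxy => exact Or.inr ⟨x, y, hxy, ha, hU rfl⟩
  | noeArr _ _ _ => exact absurd (hS (hU rfl)) (noe_notMem_arrows _)
  | arrNoe _ _ _ => exact absurd (hS ha) (noe_notMem_arrows _)
  | cycle l _ _ hlen hclosed _ =>
    obtain ⟨c, d, t, rfl⟩ : ∃ c d t, l = c :: d :: t := by
      rcases l with _ | ⟨c, _ | ⟨d, t⟩⟩ <;> simp_all
    refine Or.inl ⟨c, Relation.transGen_iff_exists_isChain.mpr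
      ⟨d, t, arrowsAlong_subset_iff.mp hU, ?_⟩⟩
    rw [List.getLast?_eq_getLast_of_ne_nil (List.cons_ne_nil _ _)] at hclosed
    exact (Option.some.inj hclosed).symm

theorem attacks_self_iff (hS : S ⊆ Arrows V) :
    Attacks S S ↔ (∃ x, Relation.TransGen (graphOf S) x x) ∨
      ∃ x y, x ≠ y ∧ arr x y ∈ S ∧ arr y x ∈ S := by
  constructor
  · rintro ⟨U, hU, a, ha, h⟩
    exact h.exists_cycle_or_two_cycle hS hU ha
  · rintro (⟨x, hx⟩ | ⟨x, y, hxy, h₁, h₂⟩)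
    · exact attacks_self_of_transGen hx
    · exact attacks_self_of_arr_mem_of_arr_mem hxy h₁ h₂

end DagAsm

/-- a set `S` of arrow assumptions is conflict-free in `D_dag`
(i.e. no subset of `S` derives the contrary of a member of `S` via the cycle
rules and mutual-exclusion rules) iff the directed graph
`(V, {(x,y) : arr x y ∈ S})` is a DAG and `S` contains at most one of
`arr x y`, `arr y x` for each pair `x ≠ y`. -/
theorem conflictFree_iff_dag {V : Type} (S : Set (DagAsm V))
    (hS : S ⊆ {a | ∃ x y : V, x ≠ y ∧ a = DagAsm.arr x y}) :
    DagAsm.ConflictFree S ↔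
      ((∀ x : V, ¬ Relation.TransGen (fun a b => DagAsm.arr a b ∈ S) x x) ∧
        ∀ x y : V, x ≠ y → ¬ (DagAsm.arr x y ∈ S ∧ DagAsm.arr y x ∈ S)) := by
  rw [DagAsm.ConflictFree, and_iff_right (hS.trans DagAsm.arrows_subset_asms),
    DagAsm.attacks_self_iff hS]
  simp only [not_or, not_exists]
  exact and_congr Iff.rfl (forall₂_congr fun x y => not_and)
end

section
/- In the causal ABA framework D_dag, preferred and stable extensions coincide: every preferred extension is stable. -/
/-! A preferred extension `S` settles every pair `x ≠ y`: if it contained neither arrow between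
`x` and `y`, then `S ∪ {noe {x, y}}` would still be conflict-free, and it would defend the new
assumption, whose only attackers are single arrows between `x` and `y`, each attacked back by
`noe {x, y}`. So `S` contains one of `arr x y`, `arr y x`, `noe {x, y}`, and that one attacks the
other two; this makes `S` stable. -/

namespace DagAsm

variable {V : Type}

theorem Attacks.mono {S S' T T' : Set (DagAsm V)} (hS : S ⊆ S') (hT : T ⊆ T')
    (h : Attacks S T) : Attacks S' T' := by
  obtain ⟨U, hU, a, ha, hatt⟩ := h
  exact ⟨U, hU.trans hS, a, hT ha, hatt⟩

theorem attacks_singleton_iff {S : Set (DagAsm V)} {a : DagAsm V} :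
    Attacks S {a} ↔ ∃ U ⊆ S, Att V U a := by
  simp [Attacks]

theorem Att.eq_singleton_arr_of_noe {U : Set (DagAsm V)} {q : Sym2 V} (h : Att V U (noe q)) :
    ∃ a b, a ≠ b ∧ q = s(a, b) ∧ U = {arr a b} := by
  cases h with
  | arrNoe a b hab => exact ⟨a, b, hab, rfl, rfl⟩

theorem Att.eq_of_noe_mem {U : Set (DagAsm V)} {a b : V} {q : Sym2 V} (h : Att V U (arr a b))
    (hq : noe q ∈ U) : q = s(a, b) := by
  cases h with
  | noeArr => exact noe.inj hq
  | arrArr => cases hq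
  | cycle => obtain ⟨_, _, h⟩ := hq; cases h

theorem ConflictFree.insert_noe {S : Set (DagAsm V)} {q : Sym2 V} (hS : ConflictFree S)
    (hq : noe q ∈ Asms V) (hSq : ∀ a b, arr a b ∈ S → s(a, b) ≠ q) :
    ConflictFree (insert (noe q) S) := by
  refine ⟨Set.insert_subset hq hS.1, ?_⟩
  rintro ⟨U, hU, c, hc, hatt⟩
  by_cases hqU : noe q ∈ U
  · cases c with
    | arr a b =>
      have hab : arr a b ∈ S := hc.resolve_left nofun
      exact hSq a b hab (hatt.eq_of_noe_mem hqU).symm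
    | noe r =>
      obtain ⟨a, b, -, -, rfl⟩ := hatt.eq_singleton_arr_of_noe
      cases hqU
  · rcases hc with rfl | hc
    · obtain ⟨a, b, -, hq, rfl⟩ := hatt.eq_singleton_arr_of_noe
      have hab : arr a b ∈ S := (hU rfl).resolve_left nofun
      exact hSq a b hab hq.symm
    · have hUS : U ⊆ S := fun u hu => (hU hu).resolve_left (by rintro rfl; exact hqU hu)
      exact hS.2 ⟨U, hUS, c, hc, hatt⟩

theorem Defends.insert_noe {S : Set (DagAsm V)} (hS : Defends S S) (q : Sym2 V) :
    Defends (insert (noe q) S) (insert (noe q) S) := by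
  rintro U hU ⟨W, hWU, c, hc | hc, hatt⟩
  · subst hc
    obtain ⟨a, b, hab, rfl, rfl⟩ := hatt.eq_singleton_arr_of_noe
    exact ⟨{noe s(a, b)}, by simp, arr a b, hWU rfl, Att.noeArr a b hab⟩
  · exact (hS U hU ⟨W, hWU, c, hc, hatt⟩).mono (Set.subset_insert _ _) le_rfl

theorem Preferred.arr_mem_or_arr_mem_or_noe_mem {S : Set (DagAsm V)} (hS : Preferred S)
    {x y : V} (hxy : x ≠ y) : arr x y ∈ S ∨ arr y x ∈ S ∨ noe s(x, y) ∈ S := by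
  by_cases hxyS : arr x y ∈ S
  · exact Or.inl hxyS
  by_cases hyxS : arr y x ∈ S
  · exact Or.inr (Or.inl hyxS)
  have hSxy : ∀ a b, arr a b ∈ S → s(a, b) ≠ s(x, y) := by
    intro a b hab h
    rcases Sym2.eq_iff.mp h with ⟨rfl, rfl⟩ | ⟨rfl, rfl⟩
    exacts [hxyS hab, hyxS hab]
  have hadm : Admissible (insert (noe s(x, y)) S) :=
    ⟨hS.1.1.insert_noe ⟨x, y, hxy, Or.inr rfl⟩ hSxy, hS.1.2.insert_noe _⟩
  have heq := hS.2 _ hadm (Set.subset_insert _ _)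
  exact Or.inr (Or.inr (heq ▸ Set.mem_insert _ _))

theorem Preferred.stable {S : Set (DagAsm V)} (hS : Preferred S) : Stable S := by
  refine ⟨hS.1.1, ?_⟩
  rintro _ ⟨x, y, hxy, rfl | rfl⟩ hnot <;> rw [attacks_singleton_iff]
  · rcases hS.arr_mem_or_arr_mem_or_noe_mem hxy with h | h | h
    · exact absurd h hnot
    · exact ⟨_, Set.singleton_subset_iff.mpr h, Att.arrArr x y hxy⟩
    · exact ⟨_, Set.singleton_subset_iff.mpr h, Att.noeArr x y hxy⟩
  · rcases hS.arr_mem_or_arr_mem_or_noe_mem hxy with h | h | h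
    · exact ⟨_, Set.singleton_subset_iff.mpr h, Att.arrNoe x y hxy⟩
    · exact ⟨_, Set.singleton_subset_iff.mpr h, Sym2.eq_swap ▸ Att.arrNoe y x hxy.symm⟩
    · exact absurd h hnot

theorem Stable.admissible {S : Set (DagAsm V)} (hS : Stable S) : Admissible S := by
  refine ⟨hS.1, fun U hU hUS => ?_⟩
  obtain ⟨b, hbU, hbS⟩ := Set.not_subset.mp fun h => hS.1.2 (hUS.mono h le_rfl)
  exact (hS.2 b (hU hbU) hbS).mono le_rfl (Set.singleton_subset_iff.mpr hbU)

theorem Stable.preferred {S : Set (DagAsm V)} (hS : Stable S) : Preferred S := by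
  refine ⟨hS.admissible, fun T hT hST => ?_⟩
  by_contra hne
  obtain ⟨b, hbT, hbS⟩ := Set.not_subset.mp fun h => hne (h.antisymm hST)
  have hSattT : Attacks S T :=
    (hS.2 b (hT.1.1 hbT) hbS).mono le_rfl (Set.singleton_subset_iff.mpr hbT)
  exact hT.1.2 ((hT.2 S hS.1.1 hSattT).mono le_rfl hST)

end DagAsm

/-- in `D_dag`, preferred and stable extensions coincide:
every preferred extension is stable (the converse being a general fact). -/
theorem preferred_iff_stable {V : Type} (S : Set (DagAsm V)) :
    DagAsm.Preferred S ↔ DagAsm.Stable S :=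
  ⟨DagAsm.Preferred.stable, DagAsm.Stable.preferred⟩
end

section
/- In the full causal ABA framework D_ds, for any stable extension S, if the conditional independence assumption (x ⫫ y | Z) belongs to S, then x and y are d-separated given Z in the DAG G(S) induced by the arrow assumptions in S. -/
/-- An x-y-path in the digraph `E`: a sequence of distinct vertices from `x` to
`y` whose consecutive members are adjacent (in either direction). -/
def IsPath {V : Type} (E : V → V → Prop) (x y : V) (l : List V) : Prop :=
  l.Nodup ∧ l.head? = some x ∧ l.getLast? = some y ∧
    l.Chain' (fun a b => E a b ∨ E b a)

/-- `l` is `Z`-active in `E`: every interior vertex that is a collider lies in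
`Z` or has a descendant in `Z`, and every interior non-collider lies outside `Z`. -/
def ZActive {V : Type} (E : V → V → Prop) (Z : Set V) (l : List V) : Prop :=
  ∀ u v w : V, [u, v, w] <:+: l →
    ((E u v ∧ E w v) → (v ∈ Z ∨ ∃ z ∈ Z, Relation.TransGen E v z)) ∧
    (¬ (E u v ∧ E w v) → v ∉ Z)

/-- `x` and `y` are d-connected given `Z` iff a `Z`-active x-y-path exists. -/
def DConnected {V : Type} (E : V → V → Prop) (Z : Set V) (x y : V) : Prop :=
  ∃ l : List V, IsPath E x y l ∧ ZActive E Z l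

/-- d-separation: the negation of d-connection. -/
def DSeparated {V : Type} (E : V → V → Prop) (Z : Set V) (x y : V) : Prop :=
  ¬ DConnected E Z x y

/-- `v` is a collider on the path `l` (w.r.t. the edge relation `F`). -/
def ColliderOn {V : Type} (F : V → V → Prop) (l : List V) (v : V) : Prop :=
  ∃ u w : V, [u, v, w] <:+: l ∧ F u v ∧ F w v

/-- An x-y-collider-tree with underlying path `p`: `p` is a path of the graph
`F` and every vertex of `F` not on `p` is a descendant (within `F`) of some
collider of `p`. -/
def IsColliderTree {V : Type} (F : V → V → Prop) (x y : V) (p : List V) : Prop :=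
  IsPath F x y p ∧
    ∀ v : V, (∃ u : V, F u v ∨ F v u) → v ∉ p →
      ∃ c : V, ColliderOn F p c ∧ Relation.TransGen F c v

/-- Assumptions of the full causal ABA framework `D_ds`: arrows, no-edge
assumptions, and conditional independence assumptions `(x ⫫ y | Z)`. -/
inductive CAsm (V : Type) : Type
  | arr : V → V → CAsm V
  | noe : Sym2 V → CAsm V
  | ind : V → V → Set V → CAsm V

namespace CAsm

/-- The assumption set of `D_ds`. -/
def Asms (V : Type) : Set (CAsm V) :=
  {a | (∃ x y : V, x ≠ y ∧ (a = arr x y ∨ a = noe s(x, y))) ∨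
       (∃ (x y : V) (Z : Set V), x ≠ y ∧ x ∉ Z ∧ y ∉ Z ∧ a = ind x y Z)}

/-- The attack relation induced by the rules of `D_ds`: the rules of `D_dag`
(mutual exclusion and cycle rules) together with, for each `Z`-active
x-y-collider-tree, an attack from its set of arrow assumptions on `(x ⫫ y | Z)`. -/
inductive Att (V : Type) : Set (CAsm V) → CAsm V → Prop
  | arrArr (x y : V) : x ≠ y → Att V {arr y x} (arr x y)
  | noeArr (x y : V) : x ≠ y → Att V {noe s(x, y)} (arr x y)
  | arrNoe (x y : V) : x ≠ y → Att V {arr x y} (noe s(x, y))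
  | cycle (l : List V) (x y : V) : 2 ≤ l.length → l.head? = l.getLast? →
      (x, y) ∈ l.zip l.tail →
      Att V {a | ∃ p ∈ l.zip l.tail, a = arr p.1 p.2} (arr x y)
  | tree (F : V → V → Prop) (p : List V) (x y : V) (Z : Set V) :
      x ≠ y → IsColliderTree F x y p → ZActive F Z p →
      Att V {a | ∃ u v : V, F u v ∧ a = arr u v} (ind x y Z)

def Attacks {V : Type} (S T : Set (CAsm V)) : Prop :=
  ∃ U ⊆ S, ∃ a ∈ T, Att V U a

def ConflictFree {V : Type} (S : Set (CAsm V)) : Prop :=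
  S ⊆ Asms V ∧ ¬ Attacks S S

def Defends {V : Type} (S T : Set (CAsm V)) : Prop :=
  ∀ U ⊆ Asms V, Attacks U T → Attacks S U

def Admissible {V : Type} (S : Set (CAsm V)) : Prop :=
  ConflictFree S ∧ Defends S S

/-- Complete: admissible and containing every assumption set it defends. -/
def Complete {V : Type} (S : Set (CAsm V)) : Prop :=
  Admissible S ∧ ∀ T ⊆ Asms V, Defends S T → T ⊆ S

/-- Stable: conflict-free and attacking every assumption outside itself. -/
def Stable {V : Type} (S : Set (CAsm V)) : Prop :=
  ConflictFree S ∧ ∀ a ∈ Asms V, a ∉ S → Attacks S {a}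

/-- The digraph `G(S)` induced by the arrow assumptions in `S`. -/
def graphOf {V : Type} (S : Set (CAsm V)) : V → V → Prop :=
  fun x y => arr x y ∈ S

end CAsm

/-! If `x` and `y` were d-connected given `Z` in `G(S)`, a `Z`-active path `l` would exist. The
edges of `l`, together with the edges of `G(S)` lying on directed walks from a collider of `l`
into `Z`, form a `Z`-active x-y-collider-tree whose arrows all belong to `S`. The rule of that
tree lets `S` attack its own member `(x ⫫ y | Z)`. -/

theorem List.isChain_iff_forall_pair_infix {α : Type*} {R : α → α → Prop} {l : List α} :
    l.IsChain R ↔ ∀ a b, [a, b] <:+: l → R a b := by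
  rw [List.isChain_iff_forall_rel_of_append_cons_cons]
  constructor
  · rintro h a b ⟨s, t, rfl⟩
    exact h (l₁ := s) (l₂ := t) (by simp)
  · rintro h a b l₁ l₂ rfl
    exact h a b ⟨l₁, l₂, by simp⟩

theorem Relation.TransGen.restrict_between {α : Type*} {r : α → α → Prop} {a b c d : α}
    (hab : TransGen r a b) (hca : ReflTransGen r c a) (hbd : ReflTransGen r b d) :
    TransGen (fun p q => r p q ∧ ReflTransGen r c p ∧ ReflTransGen r q d) a b := by
  induction hab with
  | single h => exact .single ⟨h, hca, hbd⟩
  | tail hab' h ih =>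
    exact (ih (hbd.head h)).tail ⟨h, hca.trans hab'.to_reflTransGen, hbd⟩

section ColliderTree

variable {V : Type} {E : V → V → Prop} {Z : Set V} {l : List V}

def colliderTreeOf (E : V → V → Prop) (Z : Set V) (l : List V) (u v : V) : Prop :=
  E u v ∧ (([u, v] <:+: l ∨ [v, u] <:+: l) ∨
    ∃ c, ColliderOn E l c ∧ ∃ z ∈ Z, Relation.ReflTransGen E c u ∧ Relation.ReflTransGen E v z)

theorem colliderTreeOf_iff_of_infix {u v w : V} (h : [u, v, w] <:+: l) :
    (colliderTreeOf E Z l u v ∧ colliderTreeOf E Z l w v) ↔ (E u v ∧ E w v) := by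
  refine ⟨fun hF => ⟨hF.1.1, hF.2.1⟩, fun hE => ⟨⟨hE.1, .inl (.inl ?_)⟩, ⟨hE.2, .inl (.inr ?_)⟩⟩⟩
  · exact List.IsInfix.trans ⟨[], [w], rfl⟩ h
  · exact List.IsInfix.trans ⟨[u], [], rfl⟩ h

theorem colliderOn_colliderTreeOf {c : V} (hc : ColliderOn E l c) :
    ColliderOn (colliderTreeOf E Z l) l c := by
  obtain ⟨u, w, h, hE⟩ := hc
  exact ⟨u, w, h, (colliderTreeOf_iff_of_infix h).2 hE⟩

theorem transGen_colliderTreeOf {a b c z : V} (hc : ColliderOn E l c) (hz : z ∈ Z)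
    (hab : Relation.TransGen E a b) (hca : Relation.ReflTransGen E c a)
    (hbz : Relation.ReflTransGen E b z) :
    Relation.TransGen (colliderTreeOf E Z l) a b :=
  Relation.TransGen.mono (fun _ _ ⟨hpq, hcp, hqz⟩ => ⟨hpq, .inr ⟨c, hc, z, hz, hcp, hqz⟩⟩) _ _
    (hab.restrict_between hca hbz)

theorem IsPath.colliderTreeOf {x y : V} (hl : IsPath E x y l) :
    IsPath (colliderTreeOf E Z l) x y l := by
  obtain ⟨hnd, hhd, hlast, hchain⟩ := hl
  refine ⟨hnd, hhd, hlast, List.isChain_iff_forall_pair_infix.2 fun a b hab => ?_⟩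
  rcases List.isChain_iff_forall_pair_infix.1 hchain a b hab with h | h
  · exact .inl ⟨h, .inl (.inl hab)⟩
  · exact .inr ⟨h, .inl (.inr hab)⟩

theorem ZActive.colliderTreeOf (hl : ZActive E Z l) : ZActive (colliderTreeOf E Z l) Z l := by
  intro u v w h
  obtain ⟨hcoll, hnoncoll⟩ := hl u v w h
  rw [colliderTreeOf_iff_of_infix h]
  refine ⟨fun hE => ?_, hnoncoll⟩
  rcases hcoll hE with hv | ⟨z, hz, hvz⟩
  · exact .inl hv
  · exact .inr ⟨z, hz, transGen_colliderTreeOf ⟨u, w, h, hE⟩ hz hvz .refl .refl⟩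

theorem exists_collider_of_colliderTreeOf {u v : V}
    (h : colliderTreeOf E Z l u v ∨ colliderTreeOf E Z l v u) (hv : v ∉ l) :
    ∃ c, ColliderOn E l c ∧ ∃ z ∈ Z,
      Relation.ReflTransGen E c v ∧ Relation.ReflTransGen E v z := by
  have not_adj : ¬ ([u, v] <:+: l ∨ [v, u] <:+: l) := by
    rintro (huv | hvu)
    · exact hv (huv.subset (by simp))
    · exact hv (hvu.subset (by simp))
  rcases h with ⟨huv, hadj | ⟨c, hc, z, hz, hcu, hvz⟩⟩ | ⟨hvu, hadj | ⟨c, hc, z, hz, hcv, huz⟩⟩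
  · exact absurd hadj not_adj
  · exact ⟨c, hc, z, hz, hcu.tail huv, hvz⟩
  · exact absurd hadj.symm not_adj
  · exact ⟨c, hc, z, hz, hcv, huz.head hvu⟩

theorem isColliderTree_colliderTreeOf {x y : V} (hl : IsPath E x y l) :
    IsColliderTree (colliderTreeOf E Z l) x y l := by
  refine ⟨hl.colliderTreeOf, fun v ⟨u, huv⟩ hv => ?_⟩
  obtain ⟨c, hc, z, hz, hcv, hvz⟩ := exists_collider_of_colliderTreeOf huv hv
  have hcl : c ∈ l := by
    obtain ⟨_, _, h, -⟩ := hc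
    exact h.subset (by simp)
  have hcv' : Relation.TransGen E c v :=
    (Relation.reflTransGen_iff_eq_or_transGen.1 hcv).resolve_left fun hvc => hv (hvc ▸ hcl)
  exact ⟨c, colliderOn_colliderTreeOf hc, transGen_colliderTreeOf hc hz hcv' .refl hvz⟩

theorem DConnected.exists_colliderTree {x y : V} (h : DConnected E Z x y) :
    ∃ F : V → V → Prop, (∀ u v, F u v → E u v) ∧
      ∃ p, IsColliderTree F x y p ∧ ZActive F Z p := by
  obtain ⟨l, hpath, hact⟩ := h
  exact ⟨colliderTreeOf E Z l, fun _ _ h => h.1, l,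
    isColliderTree_colliderTreeOf hpath, hact.colliderTreeOf⟩

end ColliderTree

namespace CAsm

theorem ne_of_ind_mem_asms {V : Type} {x y : V} {Z : Set V} (h : ind x y Z ∈ Asms V) : x ≠ y := by
  rcases h with ⟨_, _, _, h | h⟩ | ⟨_, _, _, hne, -, -, h⟩
  · cases h
  · cases h
  · cases h
    exact hne

theorem attacks_ind_of_dConnected {V : Type} {S : Set (CAsm V)} {x y : V} {Z : Set V}
    (hxy : x ≠ y) (h : DConnected (graphOf S) Z x y) : Attacks S {ind x y Z} := by
  obtain ⟨F, hF, p, htree, hact⟩ := h.exists_colliderTree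
  exact ⟨_, by rintro _ ⟨u, v, huv, rfl⟩; exact hF u v huv, _, rfl, .tree F p x y Z hxy htree hact⟩

end CAsm

/-- in `D_ds`, for any stable extension `S`, if the conditional
independence assumption `(x ⫫ y | Z)` belongs to `S`, then `x` and `y` are
d-separated given `Z` in the DAG `G(S)` induced by the arrow assumptions of `S`. -/
theorem stable_ind_implies_dsep {V : Type} (S : Set (CAsm V)) (hS : CAsm.Stable S)
    (x y : V) (Z : Set V) (h : CAsm.ind x y Z ∈ S) :
    DSeparated (CAsm.graphOf S) Z x y := by
  intro hconn
  obtain ⟨⟨hAsms, hconflictFree⟩, -⟩ := hS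
  obtain ⟨U, hU, a, rfl, hatt⟩ :=
    CAsm.attacks_ind_of_dConnected (CAsm.ne_of_ind_mem_asms (hAsms h)) hconn
  exact hconflictFree ⟨U, hU, _, h, hatt⟩
end

section
/- In the full causal ABA framework D_ds, for any stable extension S, if x and y are d-separated given Z in G(S), then the assumption (x ⫫ y | Z) belongs to S. -/
section Mono

variable {V : Type} {F G : V → V → Prop}

theorem collider_iff_of_le (hFG : ∀ a b, F a b → G a b) (hG : ∀ a b, a ≠ b → G a b → ¬ G b a)
    {u v w : V} (huv : u ≠ v) (hwv : w ≠ v) (hvu : F u v ∨ F v u) (hvw : F v w ∨ F w v) :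
    (G u v ∧ G w v) ↔ (F u v ∧ F w v) := by
  refine ⟨fun ⟨hGuv, hGwv⟩ => ⟨?_, ?_⟩, fun h => ⟨hFG _ _ h.1, hFG _ _ h.2⟩⟩
  · exact hvu.resolve_right fun h => hG u v huv hGuv (hFG _ _ h)
  · exact hvw.resolve_left fun h => hG w v hwv hGwv (hFG _ _ h)

theorem IsPath.mono (hFG : ∀ a b, F a b → G a b) {x y : V} {l : List V} (h : IsPath F x y l) :
    IsPath G x y l :=
  ⟨h.1, h.2.1, h.2.2.1, h.2.2.2.imp fun _ _ => Or.imp (hFG _ _) (hFG _ _)⟩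

theorem ZActive.mono (hFG : ∀ a b, F a b → G a b) (hG : ∀ a b, a ≠ b → G a b → ¬ G b a)
    {x y : V} {Z : Set V} {l : List V} (hl : IsPath F x y l) (h : ZActive F Z l) :
    ZActive G Z l := by
  intro u v w hinf
  have hnd : [u, v, w].Nodup := hl.1.sublist hinf.sublist
  have hch : [u, v, w].IsChain (fun a b => F a b ∨ F b a) := hl.2.2.2.infix hinf
  simp only [List.nodup_cons, List.mem_cons, List.not_mem_nil, or_false, not_or] at hnd
  simp only [List.isChain_cons_cons, List.isChain_singleton, and_true] at hch
  rw [collider_iff_of_le hFG hG hnd.1.1 (Ne.symm hnd.2.1) hch.1 hch.2]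
  exact (h u v w hinf).imp_left fun hcol hc =>
    (hcol hc).imp_right fun ⟨z, hz, hvz⟩ => ⟨z, hz, Relation.TransGen.mono hFG _ _ hvz⟩

theorem IsColliderTree.dConnected_of_le (hFG : ∀ a b, F a b → G a b)
    (hG : ∀ a b, a ≠ b → G a b → ¬ G b a) {x y : V} {Z : Set V} {p : List V}
    (htree : IsColliderTree F x y p) (hact : ZActive F Z p) : DConnected G Z x y :=
  ⟨p, htree.1.mono hFG, hact.mono hFG hG htree.1⟩

end Mono

namespace CAsm

variable {V : Type}

theorem ind_mem_asms {x y : V} {Z : Set V} (hxy : x ≠ y) (hx : x ∉ Z) (hy : y ∉ Z) :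
    ind x y Z ∈ Asms V :=
  Or.inr ⟨x, y, Z, hxy, hx, hy, rfl⟩

theorem ConflictFree.graphOf_asymm {S : Set (CAsm V)} (hS : ConflictFree S) (u v : V)
    (huv : u ≠ v) (h : graphOf S u v) : ¬ graphOf S v u := fun h' =>
  hS.2 ⟨{arr v u}, Set.singleton_subset_iff.mpr h', arr u v, h, Att.arrArr u v huv⟩

theorem Att.exists_colliderTree_of_ind {U : Set (CAsm V)} {x y : V} {Z : Set V}
    (h : Att V U (ind x y Z)) :
    ∃ (F : V → V → Prop) (p : List V), IsColliderTree F x y p ∧ ZActive F Z p ∧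
      ∀ a b, F a b → arr a b ∈ U := by
  cases h with
  | tree F p _ _ _ _ htree hact => exact ⟨F, p, htree, hact, fun a b h => ⟨a, b, h, rfl⟩⟩

end CAsm

/-- in `D_ds`, for any stable extension `S`, if `x` and `y` are
d-separated given `Z` in `G(S)`, then the assumption `(x ⫫ y | Z)` belongs to `S`. -/
theorem stable_dsep_implies_ind {V : Type} (S : Set (CAsm V)) (hS : CAsm.Stable S)
    (x y : V) (hxy : x ≠ y) (Z : Set V) (hx : x ∉ Z) (hy : y ∉ Z)
    (hsep : DSeparated (CAsm.graphOf S) Z x y) :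
    CAsm.ind x y Z ∈ S := by
  by_contra hind
  obtain ⟨U, hUS, _, rfl, hatt⟩ := hS.2 _ (CAsm.ind_mem_asms hxy hx hy) hind
  obtain ⟨F, p, htree, hact, hFU⟩ := hatt.exists_colliderTree_of_ind
  exact hsep (htree.dConnected_of_le (fun a b h => hUS (hFU a b h)) hS.1.graphOf_asymm hact)
end

section
/- In D_dag over variable set V with |V| = n, the number of complete extensions corresponding to the fully disconnected graph (V, ∅) is exactly 2^(n choose 2): these are precisely the subsets of {noe_{xy} : x ≠ y}. -/
/-!
In `D_dag` the only attack made by a set without arrow assumptions is `{noe {x,y}}` attacking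
`arr x y`. Hence an arrow-free set `S` is conflict-free, and it defends itself: an attack on
`noe {x,y} ∈ S` must come from `arr x y`, which `noe {x,y}` attacks back. It also defends exactly
what it contains: `arr x y` is attacked by `noe {x,y}`, which `S` cannot attack, and `noe {x,y}`
is attacked by `arr x y`, which `S` can only attack through `noe {x,y}` itself. So the arrow-free
complete extensions are the sets of no-edge assumptions, of which there are `2 ^ (n choose 2)`.
-/

namespace DagAsm

variable {V : Type} {S T U : Set (DagAsm V)}

def noeAsms (V : Type) : Set (DagAsm V) :=
  {a | ∃ x y : V, x ≠ y ∧ a = noe s(x, y)}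

theorem Att.exists_arr_mem_of_noe {z : Sym2 V} (h : Att V U (noe z)) :
    ∃ x y, x ≠ y ∧ z = s(x, y) ∧ arr x y ∈ U := by
  cases h with
  | arrNoe x y hxy => exact ⟨x, y, hxy, rfl, rfl⟩

theorem Att.exists_noe_mem_of_arrowFree {a : DagAsm V} (h : Att V U a)
    (hU : ∀ x y, arr x y ∉ U) : ∃ x y, a = arr x y ∧ noe s(x, y) ∈ U := by
  cases h with
  | arrArr x y _ => exact absurd rfl (hU y x)
  | noeArr x y _ => exact ⟨x, y, rfl, rfl⟩
  | arrNoe x y _ => exact absurd rfl (hU x y)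
  | cycle l x y _ _ hxy => exact absurd ⟨(x, y), hxy, rfl⟩ (hU x y)

theorem exists_noe_mem_of_attacks (hS : ∀ x y, arr x y ∉ S) (h : Attacks S T) :
    ∃ x y, arr x y ∈ T ∧ noe s(x, y) ∈ S := by
  obtain ⟨U, hUS, a, haT, hatt⟩ := h
  obtain ⟨x, y, rfl, hxy⟩ := hatt.exists_noe_mem_of_arrowFree fun x y h => hS x y (hUS h)
  exact ⟨x, y, haT, hUS hxy⟩

theorem not_attacks_self (hS : ∀ x y, arr x y ∉ S) : ¬ Attacks S S := fun h =>
  let ⟨x, y, harr, _⟩ := exists_noe_mem_of_attacks hS h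
  hS x y harr

theorem defends_self (hS : ∀ x y, arr x y ∉ S) : Defends S S := by
  rintro U - ⟨W, hWU, a, haS, hatt⟩
  cases a with
  | arr x y => exact absurd haS (hS x y)
  | noe z =>
    obtain ⟨x, y, hxy, rfl, harr⟩ := hatt.exists_arr_mem_of_noe
    exact ⟨{noe s(x, y)}, Set.singleton_subset_iff.2 haS, arr x y, hWU harr, Att.noeArr x y hxy⟩

theorem subset_of_defends (hS : ∀ x y, arr x y ∉ S) (hT : T ⊆ Asms V) (hdef : Defends S T) :
    T ⊆ S := by
  intro t ht
  obtain ⟨x, y, hxy, rfl | rfl⟩ := hT ht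
  · have hattack : Attacks {noe s(x, y)} T := ⟨_, subset_rfl, _, ht, Att.noeArr x y hxy⟩
    obtain ⟨_, _, h, -⟩ := exists_noe_mem_of_attacks hS
      (hdef _ (Set.singleton_subset_iff.2 ⟨x, y, hxy, Or.inr rfl⟩) hattack)
    cases h
  · have hattack : Attacks {arr x y} T := ⟨_, subset_rfl, _, ht, Att.arrNoe x y hxy⟩
    obtain ⟨x', y', h, hnoe⟩ := exists_noe_mem_of_attacks hS
      (hdef _ (Set.singleton_subset_iff.2 ⟨x, y, hxy, Or.inl rfl⟩) hattack)
    obtain ⟨rfl, rfl⟩ : x' = x ∧ y' = y := by simpa using h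
    exact hnoe

theorem complete_iff_subset_asms (hS : ∀ x y, arr x y ∉ S) : Complete S ↔ S ⊆ Asms V :=
  ⟨fun h => h.1.1.1, fun h =>
    ⟨⟨⟨h, not_attacks_self hS⟩, defends_self hS⟩, fun _ hT => subset_of_defends hS hT⟩⟩

theorem subset_noeAsms_iff : S ⊆ noeAsms V ↔ S ⊆ Asms V ∧ ∀ x y, arr x y ∉ S := by
  constructor
  · intro h
    refine ⟨fun a ha => ?_, fun x y harr => ?_⟩
    · obtain ⟨x, y, hxy, rfl⟩ := h ha
      exact ⟨x, y, hxy, Or.inr rfl⟩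
    · obtain ⟨_, _, _, h⟩ := h harr
      cases h
  · rintro ⟨hA, hS⟩ a ha
    obtain ⟨x, y, hxy, rfl | rfl⟩ := hA ha
    · exact absurd ha (hS x y)
    · exact ⟨x, y, hxy, rfl⟩

theorem setOf_complete_arrowFree_eq :
    {S : Set (DagAsm V) | Complete S ∧ ∀ x y, arr x y ∉ S} = {S | S ⊆ noeAsms V} := by
  ext S
  simp only [Set.mem_ofPred_eq, subset_noeAsms_iff]
  exact ⟨fun ⟨hc, hS⟩ => ⟨(complete_iff_subset_asms hS).1 hc, hS⟩,
    fun ⟨hA, hS⟩ => ⟨(complete_iff_subset_asms hS).2 hA, hS⟩⟩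

theorem noeAsms_eq_image : noeAsms V = noe '' {z | ¬ z.IsDiag} := by
  ext a
  constructor
  · rintro ⟨x, y, hxy, rfl⟩
    exact ⟨s(x, y), Sym2.mk_isDiag_iff.not.2 hxy, rfl⟩
  · rintro ⟨z, hz, rfl⟩
    induction z using Sym2.ind with
    | _ x y => exact ⟨x, y, Sym2.mk_isDiag_iff.not.1 hz, rfl⟩

theorem finite_noeAsms [Finite V] : (noeAsms V).Finite :=
  noeAsms_eq_image ▸ (Set.toFinite _).image _

theorem ncard_noeAsms [Fintype V] : (noeAsms V).ncard = (Fintype.card V).choose 2 := by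
  classical
  rw [noeAsms_eq_image, Set.ncard_image_of_injective _ fun _ _ => noe.inj,
    ← Nat.card_coe_set_eq, Nat.card_eq_fintype_card]
  exact Sym2.card_subtype_not_diag

end DagAsm

theorem complete_extensions_of_disconnected_graph_general {V : Type} [Fintype V]
    {n : ℕ} (hcard : Fintype.card V = n) :
    {S : Set (DagAsm V) | DagAsm.Complete S ∧ ∀ x y : V, DagAsm.arr x y ∉ S}
        = {S : Set (DagAsm V) |
            S ⊆ {a | ∃ x y : V, x ≠ y ∧ a = DagAsm.noe s(x, y)}} ∧
      {S : Set (DagAsm V) |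
        DagAsm.Complete S ∧ ∀ x y : V, DagAsm.arr x y ∉ S}.ncard = 2 ^ n.choose 2 := by
  rw [DagAsm.setOf_complete_arrowFree_eq]
  refine ⟨rfl, ?_⟩
  rw [← Set.powerset, Set.ncard_powerset _ DagAsm.finite_noeAsms, DagAsm.ncard_noeAsms, hcard]

/-- in `D_dag` over a variable set `V` with `|V| = n`, the complete
extensions corresponding to the fully disconnected graph `(V, ∅)` (those containing
no arrow assumption) are precisely the subsets of `{noe {x,y} : x ≠ y}`, and there
are exactly `2^(n choose 2)` of them. -/
theorem complete_extensions_of_disconnected_graph {V : Type} [Fintype V]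
    [DecidableEq V] {n : ℕ} (hcard : Fintype.card V = n) :
    {S : Set (DagAsm V) | DagAsm.Complete S ∧ ∀ x y : V, DagAsm.arr x y ∉ S}
        = {S : Set (DagAsm V) |
            S ⊆ {a | ∃ x y : V, x ≠ y ∧ a = DagAsm.noe s(x, y)}} ∧
      {S : Set (DagAsm V) |
        DagAsm.Complete S ∧ ∀ x y : V, DagAsm.arr x y ∉ S}.ncard = 2 ^ n.choose 2 :=
  complete_extensions_of_disconnected_graph_general hcard
end
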